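/- arXiv:1501.06627 — 2 statements merged into one kernel-verified Lean document; each statement's English description precedes it below -/
import Mathlib

section
/- Consider an assignment problem with two agents and m objects where both agents have identical utilities given by positive integers w_1, …, w_m with Σ_{j=1}^m w_j = 2W. Then there exists a complete discrete CEEI-DISC assignment if and only if there exists a subset S ⊆ {1,…,m} with Σ_{j∈S} w_j = W (i.e., the Partition instance is a yes-instance). -/
/-!
With identical additive utilities, every bundle one agent gets is affordable for the other, so in a
CEEI-DISC assignment both agents have the same utility, namely half of the total `2W`; the first
agent's bundle is then a solution of Partition. Conversely, a solution `S` of Partition gives the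
assignment `(S, Sᶜ)`, which is CEEI-DISC for prices proportional to utilities, `p_j = w_j / W`:
a bundle is then affordable exactly when its utility is at most `W`.
-/

open Finset

/-- Utility an agent with (row) utility function `ui` derives from a (row) allocation `xi`. -/
noncomputable def utilOf {m : ℕ} (ui : Fin m → ℝ) (xi : Fin m → ℝ) : ℝ :=
  ∑ j, xi j * ui j

/-- A complete fractional assignment: entries in [0,1], every column (object) fully allocated. -/
def IsFracAssignment {n m : ℕ} (x : Fin n → Fin m → ℝ) : Prop :=
  (∀ i j, 0 ≤ x i j ∧ x i j ≤ 1) ∧ (∀ j, ∑ i, x i j = 1)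

/-- A complete discrete assignment: entries in {0,1}, every column (object) fully allocated. -/
def IsDiscreteAssignment {n m : ℕ} (x : Fin n → Fin m → ℝ) : Prop :=
  (∀ i j, x i j = 0 ∨ x i j = 1) ∧ (∀ j, ∑ i, x i j = 1)

/-- `x` is a CEEI-DISC assignment witnessed by the price vector `p`: prices are nonnegative,
and every agent's bundle is a discrete bundle of price at most 1 that maximizes the agent's
utility among all discrete bundles of price at most 1. -/
noncomputable def CEEIDiscWith {n m : ℕ} (u : Fin n → Fin m → ℝ)
    (x : Fin n → Fin m → ℝ) (p : Fin m → ℝ) : Prop :=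
  (∀ j, 0 ≤ p j) ∧
  ∀ i, (∀ j, x i j = 0 ∨ x i j = 1) ∧ (∑ j, x i j * p j ≤ 1) ∧
    ∀ y : Fin m → ℝ, (∀ j, y j = 0 ∨ y j = 1) → (∑ j, y j * p j ≤ 1) →
      utilOf (u i) y ≤ utilOf (u i) (x i)

noncomputable def CEEIDisc {n m : ℕ} (u : Fin n → Fin m → ℝ)
    (x : Fin n → Fin m → ℝ) : Prop :=
  ∃ p : Fin m → ℝ, CEEIDiscWith u x p

/-- `x` is a CEEI-FRAC assignment witnessed by the price vector `p`: prices are nonnegative,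
and every agent's bundle lies in [0,1]^m, costs at most 1, and maximizes the agent's utility
among all fractional bundles of price at most 1. -/
noncomputable def CEEIFracWith {n m : ℕ} (u : Fin n → Fin m → ℝ)
    (x : Fin n → Fin m → ℝ) (p : Fin m → ℝ) : Prop :=
  (∀ j, 0 ≤ p j) ∧
  ∀ i, (∀ j, 0 ≤ x i j ∧ x i j ≤ 1) ∧ (∑ j, x i j * p j ≤ 1) ∧
    ∀ y : Fin m → ℝ, (∀ j, 0 ≤ y j ∧ y j ≤ 1) → (∑ j, y j * p j ≤ 1) →
      utilOf (u i) y ≤ utilOf (u i) (x i)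

noncomputable def CEEIFrac {n m : ℕ} (u : Fin n → Fin m → ℝ)
    (x : Fin n → Fin m → ℝ) : Prop :=
  ∃ p : Fin m → ℝ, CEEIFracWith u x p

/-- The Nash welfare of an assignment. -/
noncomputable def nash {n m : ℕ} (u : Fin n → Fin m → ℝ)
    (x : Fin n → Fin m → ℝ) : ℝ :=
  ∏ i, utilOf (u i) (x i)

section

variable {n m : ℕ}

theorem utilOf_eq_sum_filter (v : Fin m → ℝ) {y : Fin m → ℝ} (hy : ∀ j, y j = 0 ∨ y j = 1) :
    utilOf v y = ∑ j ∈ univ.filter (fun j => y j = 1), v j := by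
  rw [utilOf, sum_filter]
  refine sum_congr rfl fun j _ => ?_
  rcases hy j with h | h <;> simp [h]

theorem utilOf_le_sum {v y : Fin m → ℝ} (hv : ∀ j, 0 ≤ v j) (hy : ∀ j, y j ≤ 1) :
    utilOf v y ≤ ∑ j, v j :=
  sum_le_sum fun j _ => mul_le_of_le_one_left (hv j) (hy j)

theorem sum_utilOf_eq_sum {x : Fin n → Fin m → ℝ} (hx : ∀ j, ∑ i, x i j = 1) (v : Fin m → ℝ) :
    ∑ i, utilOf v (x i) = ∑ j, v j := by
  simp only [utilOf]
  rw [sum_comm]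
  exact sum_congr rfl fun j _ => by rw [← sum_mul, hx j, one_mul]

namespace CEEIDiscWith

variable {v : Fin m → ℝ} {x : Fin n → Fin m → ℝ} {p : Fin m → ℝ}

theorem utilOf_le (h : CEEIDiscWith (fun _ => v) x p) (i k : Fin n) :
    utilOf v (x i) ≤ utilOf v (x k) :=
  (h.2 k).2.2 (x i) (h.2 i).1 (h.2 i).2.1

theorem utilOf_eq (h : CEEIDiscWith (fun _ => v) x p) (i k : Fin n) :
    utilOf v (x i) = utilOf v (x k) :=
  (h.utilOf_le i k).antisymm (h.utilOf_le k i)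

theorem card_mul_utilOf_eq_sum (h : CEEIDiscWith (fun _ => v) x p)
    (hx : ∀ j, ∑ i, x i j = 1) (i : Fin n) :
    n * utilOf v (x i) = ∑ j, v j := by
  rw [← sum_utilOf_eq_sum hx v, sum_congr rfl fun k _ => h.utilOf_eq k i]
  simp

end CEEIDiscWith

theorem sum_mul_div_eq_utilOf_div (v y : Fin m → ℝ) (c : ℝ) :
    ∑ j, y j * (v j / c) = utilOf v y / c := by
  rw [utilOf, sum_div]
  exact sum_congr rfl fun j _ => mul_div_assoc' _ _ _

theorem ceeiDiscWith_of_utilOf_eq {v : Fin m → ℝ} (hv : ∀ j, 0 ≤ v j)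
    {x : Fin n → Fin m → ℝ} (hx : IsDiscreteAssignment x) {c : ℝ} (hc : 0 ≤ c)
    (hxc : ∀ i, utilOf v (x i) = c) :
    CEEIDiscWith (fun _ => v) x (fun j => v j / c) := by
  refine ⟨fun j => div_nonneg (hv j) hc, fun i => ⟨hx.1 i, ?_, fun y hy hbudget => ?_⟩⟩
  · rw [sum_mul_div_eq_utilOf_div, hxc i]
    exact div_self_le_one c
  rw [hxc i]
  rcases hc.eq_or_lt with rfl | hc
  · -- the prices `v j / 0` are all zero, but then so is the total utility `∑ j, v j = n * 0`
    calc utilOf v y ≤ ∑ j, v j := utilOf_le_sum hv fun j => by rcases hy j with h | h <;> simp [h]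
      _ = 0 := by simp [← sum_utilOf_eq_sum hx.2 v, hxc]
  · rw [sum_mul_div_eq_utilOf_div] at hbudget
    exact (div_le_one hc).mp hbudget

def bundleOf (S : Finset (Fin m)) : Fin m → ℝ := fun j => if j ∈ S then 1 else 0

theorem utilOf_bundleOf (v : Fin m → ℝ) (S : Finset (Fin m)) :
    utilOf v (bundleOf S) = ∑ j ∈ S, v j := by
  simp [utilOf, bundleOf, sum_ite_mem]

theorem isDiscreteAssignment_bundleOf_compl (S : Finset (Fin m)) :
    IsDiscreteAssignment ![bundleOf S, bundleOf Sᶜ] := by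
  refine ⟨fun i j => ?_, fun j => ?_⟩
  · fin_cases i <;> by_cases h : j ∈ S <;> simp [bundleOf, h]
  · by_cases h : j ∈ S <;> simp [bundleOf, h]

end

theorem ceei_disc_iff_partition_general (m W : ℕ) (w : Fin m → ℕ)
    (hsum : ∑ j, w j = 2 * W)
    (u : Fin 2 → Fin m → ℝ) (hu : ∀ i j, u i j = (w j : ℝ)) :
    (∃ x : Fin 2 → Fin m → ℝ, IsDiscreteAssignment x ∧ CEEIDisc u x) ↔
      (∃ S : Finset (Fin m), ∑ j ∈ S, w j = W) := by
  obtain rfl : u = fun _ j => (w j : ℝ) := funext fun i => funext (hu i)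
  have hsumR : ∑ j, (w j : ℝ) = 2 * W := by exact_mod_cast hsum
  constructor
  · rintro ⟨x, hx, p, hp⟩
    have h := hp.card_mul_utilOf_eq_sum hx.2 0
    rw [Nat.cast_ofNat, utilOf_eq_sum_filter _ (hx.1 0), hsumR, mul_right_inj' two_ne_zero] at h
    exact ⟨_, by exact_mod_cast h⟩
  · rintro ⟨S, hS⟩
    have hSR : ∑ j ∈ S, (w j : ℝ) = W := by exact_mod_cast hS
    have hScR : ∑ j ∈ Sᶜ, (w j : ℝ) = W := by linarith [sum_add_sum_compl S fun j => (w j : ℝ)]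
    refine ⟨_, isDiscreteAssignment_bundleOf_compl S, _,
      ceeiDiscWith_of_utilOf_eq (fun j => (w j).cast_nonneg) (isDiscreteAssignment_bundleOf_compl S)
        W.cast_nonneg ?_⟩
    simp [Fin.forall_fin_two, utilOf_bundleOf, hSR, hScR]

/-- Partition reduction: with two agents having identical integer utilities summing to 2W,
a complete discrete CEEI-DISC assignment exists iff the Partition instance is a yes-instance. -/
theorem ceei_disc_iff_partition (m W : ℕ) (w : Fin m → ℕ) (hw : ∀ j, 0 < w j)
    (hsum : ∑ j, w j = 2 * W)
    (u : Fin 2 → Fin m → ℝ) (hu : ∀ i j, u i j = (w j : ℝ)) :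
    (∃ x : Fin 2 → Fin m → ℝ, IsDiscreteAssignment x ∧ CEEIDisc u x) ↔
      (∃ S : Finset (Fin m), ∑ j ∈ S, w j = W) :=
  ceei_disc_iff_partition_general m W w hsum u hu
end

section
/- In an assignment problem where for every object some agent assigns it positive utility and for every agent some object has positive utility to them, a CEEI-FRAC fractional assignment always exists; in particular, there exists a fractional assignment maximizing the Nash welfare ∏_{i∈N} u_i(x_i), and every such maximizer is CEEI-FRAC. -/
open Finset

/-!
A Nash-welfare maximizer exists by compactness, and it gives every agent positive utility,
since splitting each object in proportion to the agents' utilities already has positive Nash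
welfare. At a maximizer `x` with utilities `v i`, Fermat's rule on the convex set of assignments
says that moving towards any assignment `y` does not increase the Nash welfare to first order,
i.e. `∑ i, u_i(y i) / v i ≤ n`. Giving object `j` entirely to agent `k` then shows
`u k j / v k ≤ p j := ∑ i, x i j * u i j / v i`. At these prices every agent spends at least its
budget; as the total spending is `n`, each spends exactly `1`, and no bundle of price at most `1`
is worth more than `v i` to agent `i`.
-/

open Matrix

section Assignments

variable {n m : ℕ}

lemma utilOf_eq_dotProduct (ui xi : Fin m → ℝ) : utilOf ui xi = xi ⬝ᵥ ui := rfl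

lemma utilOf_nonneg {ui xi : Fin m → ℝ} (hu : ∀ j, 0 ≤ ui j) (hx : ∀ j, 0 ≤ xi j) :
    0 ≤ utilOf ui xi :=
  sum_nonneg fun j _ => mul_nonneg (hx j) (hu j)

lemma isCompact_setOf_isFracAssignment :
    IsCompact {x : Fin n → Fin m → ℝ | IsFracAssignment x} := by
  have hclosed : IsClosed {x : Fin n → Fin m → ℝ | IsFracAssignment x} := by
    simp only [IsFracAssignment, Set.ofPred_and, Set.ofPred_forall]
    refine .inter (isClosed_iInter fun i => isClosed_iInter fun j => .inter ?_ ?_)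
      (isClosed_iInter fun j => ?_)
    · exact isClosed_le continuous_const (by fun_prop)
    · exact isClosed_le (by fun_prop) continuous_const
    · exact isClosed_eq (by fun_prop) continuous_const
  exact (isCompact_univ_pi fun _ => isCompact_univ_pi fun _ => isCompact_Icc).of_isClosed_subset
    hclosed fun x hx i _ j _ => hx.1 i j

lemma convex_setOf_isFracAssignment :
    Convex ℝ {x : Fin n → Fin m → ℝ | IsFracAssignment x} := by
  intro x hx y hy a b ha hb hab
  refine ⟨fun i j => ⟨?_, ?_⟩, fun j => ?_⟩
  · simp only [Pi.add_apply, Pi.smul_apply, smul_eq_mul]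
    nlinarith [hx.1 i j, hy.1 i j]
  · simp only [Pi.add_apply, Pi.smul_apply, smul_eq_mul]
    nlinarith [hx.1 i j, hy.1 i j]
  · simp only [Pi.add_apply, Pi.smul_apply, smul_eq_mul, sum_add_distrib, ← mul_sum, hx.2 j,
      hy.2 j]
    linarith

lemma continuous_nash (u : Fin n → Fin m → ℝ) : Continuous (nash u) := by
  unfold nash utilOf
  fun_prop

lemma exists_isMaxOn_nash (u : Fin n → Fin m → ℝ)
    (hne : {x : Fin n → Fin m → ℝ | IsFracAssignment x}.Nonempty) :
    ∃ x, IsFracAssignment x ∧ IsMaxOn (nash u) {x | IsFracAssignment x} x :=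
  isCompact_setOf_isFracAssignment.exists_isMaxOn hne (continuous_nash u).continuousOn

def utilCLM (u : Fin n → Fin m → ℝ) (i : Fin n) : (Fin n → Fin m → ℝ) →L[ℝ] ℝ :=
  ∑ j, u i j • (ContinuousLinearMap.proj (R := ℝ) (φ := fun _ : Fin m => ℝ) j).comp
    (ContinuousLinearMap.proj (R := ℝ) (φ := fun _ : Fin n => Fin m → ℝ) i)

lemma utilCLM_apply (u : Fin n → Fin m → ℝ) (i : Fin n) (x : Fin n → Fin m → ℝ) :
    utilCLM u i x = utilOf (u i) (x i) := by
  simp [utilCLM, utilOf, mul_comm]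

lemma hasFDerivAt_nash (u : Fin n → Fin m → ℝ) (x : Fin n → Fin m → ℝ) :
    HasFDerivAt (nash u)
      (∑ i, (∏ l ∈ univ.erase i, utilOf (u l) (x l)) • utilCLM u i) x := by
  have := HasFDerivAt.finsetProd (u := univ) (x := x) fun i _ => (utilCLM u i).hasFDerivAt
  simp only [utilCLM_apply] at this
  exact this

lemma nash_eq_mul_prod_erase (u : Fin n → Fin m → ℝ) (x : Fin n → Fin m → ℝ) (i : Fin n) :
    nash u x = utilOf (u i) (x i) * ∏ l ∈ univ.erase i, utilOf (u l) (x l) :=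
  (mul_prod_erase _ _ (mem_univ i)).symm

lemma sum_utilOf_div_le_card_of_isMaxOn {u : Fin n → Fin m → ℝ} {x y : Fin n → Fin m → ℝ}
    (hx : IsFracAssignment x) (hy : IsFracAssignment y)
    (hmax : IsMaxOn (nash u) {x | IsFracAssignment x} x) (hv : ∀ i, 0 < utilOf (u i) (x i)) :
    ∑ i, utilOf (u i) (y i) / utilOf (u i) (x i) ≤ n := by
  have hfermat := hmax.localize.hasFDerivWithinAt_nonpos (hasFDerivAt_nash u x).hasFDerivWithinAt
    (sub_mem_posTangentConeAt_of_segment_subset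
      (convex_setOf_isFracAssignment.segment_subset hx hy))
  have hterm : ∀ i, (∏ l ∈ univ.erase i, utilOf (u l) (x l)) *
      (utilOf (u i) (y i) - utilOf (u i) (x i)) =
      nash u x * (utilOf (u i) (y i) / utilOf (u i) (x i) - 1) := by
    intro i
    rw [nash_eq_mul_prod_erase u x i]
    field_simp [(hv i).ne']
  have hderiv : ∑ i, (∏ l ∈ univ.erase i, utilOf (u l) (x l)) *
      (utilOf (u i) (y i) - utilOf (u i) (x i)) ≤ 0 := by
    convert hfermat using 1
    simp [utilCLM_apply, utilOf_eq_dotProduct, sub_dotProduct]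
  rw [sum_congr rfl fun i _ => hterm i, ← mul_sum] at hderiv
  have := nonpos_of_mul_nonpos_right hderiv (prod_pos fun i _ => hv i)
  simpa [sum_sub_distrib] using this

def giveObject (x : Fin n → Fin m → ℝ) (j : Fin m) (k : Fin n) : Fin n → Fin m → ℝ :=
  fun l => Function.update (x l) j (if l = k then 1 else 0)

lemma isFracAssignment_giveObject {x : Fin n → Fin m → ℝ} (hx : IsFracAssignment x)
    (j : Fin m) (k : Fin n) : IsFracAssignment (giveObject x j k) := by
  refine ⟨fun l j' => ?_, fun j' => ?_⟩
  · rcases eq_or_ne j' j with rfl | hj'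
    · simp only [giveObject, Function.update_self]
      split_ifs <;> norm_num
    · simpa [giveObject, hj'] using hx.1 l j'
  · rcases eq_or_ne j' j with rfl | hj'
    · simp [giveObject]
    · simpa [giveObject, hj'] using hx.2 j'

lemma utilOf_update (ui xi : Fin m → ℝ) (j : Fin m) (t : ℝ) :
    utilOf ui (Function.update xi j t) = utilOf ui xi + (t - xi j) * ui j := by
  unfold utilOf
  rw [← add_sum_erase _ _ (mem_univ j), ← add_sum_erase _ _ (mem_univ j),
    sum_congr rfl fun j' hj' => by rw [Function.update_of_ne (ne_of_mem_erase hj')]]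
  simp only [Function.update_self]
  ring

lemma sum_mul_div_utilOf {ui xi : Fin m → ℝ} (hv : 0 < utilOf ui xi) :
    ∑ j, xi j * ui j / utilOf ui xi = 1 := by
  rw [← sum_div]
  exact div_self hv.ne'

/-- Each agent splits its unit budget over the objects in proportion to the utility it derives
from them, and `marketPrice u x j` collects what is spent on `j`. -/
noncomputable def marketPrice (u x : Fin n → Fin m → ℝ) (j : Fin m) : ℝ :=
  ∑ i, x i j * u i j / utilOf (u i) (x i)

lemma div_utilOf_le_marketPrice_of_isMaxOn {u x : Fin n → Fin m → ℝ} (hx : IsFracAssignment x)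
    (hmax : IsMaxOn (nash u) {x | IsFracAssignment x} x) (hv : ∀ i, 0 < utilOf (u i) (x i))
    (k : Fin n) (j : Fin m) :
    u k j / utilOf (u k) (x k) ≤ marketPrice u x j := by
  have h := sum_utilOf_div_le_card_of_isMaxOn hx (isFracAssignment_giveObject hx j k) hmax hv
  simp only [giveObject, utilOf_update, sub_mul, ite_mul, one_mul, zero_mul, add_div,
    div_self (hv _).ne', sub_div, ite_div, zero_div, sum_add_distrib, sum_const, card_univ,
    Fintype.card_fin, nsmul_eq_mul, mul_one, sum_sub_distrib, sum_ite_eq', mem_univ, ↓reduceIte,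
    add_le_iff_nonpos_right, tsub_le_iff_right, zero_add] at h
  exact h

lemma ceeiFracWith_marketPrice {u x : Fin n → Fin m → ℝ} (hnn : ∀ i j, 0 ≤ u i j)
    (hx : IsFracAssignment x) (hv : ∀ i, 0 < utilOf (u i) (x i))
    (hbound : ∀ k j, u k j / utilOf (u k) (x k) ≤ marketPrice u x j) :
    CEEIFracWith u x (marketPrice u x) := by
  have hspend_ge : ∀ i, 1 ≤ ∑ j, x i j * marketPrice u x j := fun i =>
    calc 1 = ∑ j, x i j * (u i j / utilOf (u i) (x i)) := by
          simp_rw [← mul_div_assoc, sum_mul_div_utilOf (hv i)]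
      _ ≤ ∑ j, x i j * marketPrice u x j :=
          sum_le_sum fun j _ => mul_le_mul_of_nonneg_left (hbound i j) (hx.1 i j).1
  have hspend_total : ∑ i, ∑ j, x i j * marketPrice u x j = ∑ _i : Fin n, (1 : ℝ) := by
    rw [sum_comm]
    simp_rw [← sum_mul, hx.2, one_mul, marketPrice]
    rw [sum_comm]
    simp_rw [sum_mul_div_utilOf (hv _)]
  have hspend : ∀ i, ∑ j, x i j * marketPrice u x j = 1 := fun i =>
    ((sum_eq_sum_iff_of_le fun i _ => hspend_ge i).1 hspend_total.symm i (mem_univ i)).symm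
  refine ⟨fun j => sum_nonneg fun i _ => div_nonneg (mul_nonneg (hx.1 i j).1 (hnn i j))
    (hv i).le, fun i => ⟨hx.1 i, (hspend i).le, fun y hy hbudget => ?_⟩⟩
  calc utilOf (u i) y ≤ ∑ j, y j * (marketPrice u x j * utilOf (u i) (x i)) :=
        sum_le_sum fun j _ => mul_le_mul_of_nonneg_left
          ((div_le_iff₀ (hv i)).1 (hbound i j)) (hy j).1
    _ = (∑ j, y j * marketPrice u x j) * utilOf (u i) (x i) := by
        simp_rw [sum_mul, mul_assoc]
    _ ≤ utilOf (u i) (x i) := mul_le_of_le_one_left (hv i).le hbudget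

noncomputable def proportionalAssignment (u : Fin n → Fin m → ℝ) : Fin n → Fin m → ℝ :=
  fun i j => u i j / ∑ k, u k j

lemma isFracAssignment_proportionalAssignment {u : Fin n → Fin m → ℝ}
    (hnn : ∀ i j, 0 ≤ u i j) (hobj : ∀ j, ∃ i, 0 < u i j) :
    IsFracAssignment (proportionalAssignment u) := by
  have hS : ∀ j, 0 < ∑ k, u k j := fun j =>
    let ⟨i, hi⟩ := hobj j
    sum_pos' (fun k _ => hnn k j) ⟨i, mem_univ i, hi⟩
  refine ⟨fun i j => ⟨div_nonneg (hnn i j) (hS j).le, ?_⟩, fun j => ?_⟩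
  · exact div_le_one_of_le₀ (single_le_sum (fun k _ => hnn k j) (mem_univ i)) (hS j).le
  · simp only [proportionalAssignment]
    rw [← sum_div, div_self (hS j).ne']

lemma nash_proportionalAssignment_pos {u : Fin n → Fin m → ℝ}
    (hnn : ∀ i j, 0 ≤ u i j) (hobj : ∀ j, ∃ i, 0 < u i j) (hag : ∀ i, ∃ j, 0 < u i j) :
    0 < nash u (proportionalAssignment u) := by
  have hx := isFracAssignment_proportionalAssignment hnn hobj
  refine prod_pos fun i _ => ?_
  obtain ⟨j, hj⟩ := hag i
  refine sum_pos' (fun j _ => mul_nonneg (hx.1 i j).1 (hnn i j)) ⟨j, mem_univ j, mul_pos ?_ hj⟩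
  exact div_pos hj (hj.trans_le (single_le_sum (fun k _ => hnn k j) (mem_univ i)))

lemma utilOf_pos_of_nash_pos {u x : Fin n → Fin m → ℝ} (hnn : ∀ i j, 0 ≤ u i j)
    (hx : IsFracAssignment x) (h : 0 < nash u x) (i : Fin n) : 0 < utilOf (u i) (x i) :=
  (utilOf_nonneg (hnn i) fun j => (hx.1 i j).1).lt_of_ne
    (prod_ne_zero_iff.1 h.ne' i (mem_univ i)).symm

end Assignments

/-- A CEEI-FRAC fractional assignment always exists; in particular a Nash-welfare-maximizing
fractional assignment exists and every such maximizer is CEEI-FRAC. -/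
theorem ceei_frac_exists (n m : ℕ) (u : Fin n → Fin m → ℝ)
    (hnn : ∀ i j, 0 ≤ u i j)
    (hobj : ∀ j, ∃ i, 0 < u i j) (hag : ∀ i, ∃ j, 0 < u i j) :
    (∃ x : Fin n → Fin m → ℝ, IsFracAssignment x ∧ CEEIFrac u x) ∧
    (∃ x : Fin n → Fin m → ℝ, IsFracAssignment x ∧
      ∀ y : Fin n → Fin m → ℝ, IsFracAssignment y → nash u y ≤ nash u x) ∧
    (∀ x : Fin n → Fin m → ℝ, IsFracAssignment x →
      (∀ y : Fin n → Fin m → ℝ, IsFracAssignment y → nash u y ≤ nash u x) →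
      CEEIFrac u x) := by
  have hprop := isFracAssignment_proportionalAssignment hnn hobj
  have hceei : ∀ x, IsFracAssignment x →
      IsMaxOn (nash u) {x | IsFracAssignment x} x → CEEIFrac u x := fun x hx hmax =>
    have hv := utilOf_pos_of_nash_pos hnn hx
      ((nash_proportionalAssignment_pos hnn hobj hag).trans_le (hmax hprop))
    ⟨_, ceeiFracWith_marketPrice hnn hx hv (div_utilOf_le_marketPrice_of_isMaxOn hx hmax hv)⟩
  obtain ⟨x, hx, hmax⟩ := exists_isMaxOn_nash u ⟨_, hprop⟩
  exact ⟨⟨x, hx, hceei x hx hmax⟩, ⟨x, hx, fun y hy => hmax hy⟩,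
    fun x hx hmax => hceei x hx fun y hy => hmax y hy⟩
end
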